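/- arXiv:cs/0411076 — 10 statements merged into one kernel-verified Lean document; each statement's English description precedes it below -/
import Mathlib

section
/- If z ∈ {0,1}^n has exactly m ones, then the eigenvalue of M_a associated to the eigenvector v_z equals Σ_{j=0}^{a} Σ_{k} C(m,k)·C(n−m, j−k)·(−1)^k, where the inner sum ranges over max{0, j+m−n} ≤ k ≤ min{j,m}. -/
open Finset

lemma fiber_card (n j k m : ℕ) (S : Finset (Fin n)) (hS : S.card = m) (hk : k ≤ j) :
    (univ.filter (fun T : Finset (Fin n) => T.card = j ∧ (T ∩ S).card = k)).card
      = m.choose k * (n - m).choose (j - k) := by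
  have hcompl : Sᶜ.card = n - m := by
    rw [card_compl, hS, Fintype.card_fin]
  rw [show m.choose k * (n-m).choose (j-k)
      = ((S.powersetCard k) ×ˢ (Sᶜ.powersetCard (j-k))).card by
    rw [card_product, card_powersetCard, card_powersetCard, hS, hcompl]]
  apply Finset.card_nbij' (fun T => (T ∩ S, T \ S)) (fun p => p.1 ∪ p.2)
  · rintro T hT
    simp only [mem_coe, mem_filter, mem_univ, true_and] at hT
    obtain ⟨hTj, hTk⟩ := hT
    simp only [mem_coe, mem_product, mem_powersetCard]
    refine ⟨⟨inter_subset_right, hTk⟩, ?_, ?_⟩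
    · intro x hx; simp only [mem_sdiff] at hx; simp [hx.2]
    · have := Finset.card_sdiff_add_card_inter T S
      omega
  · rintro ⟨A, B⟩ hp
    simp only [mem_coe, mem_product, mem_powersetCard] at hp
    obtain ⟨⟨hAS, hAk⟩, hBS, hBk⟩ := hp
    have hdisj : Disjoint A B := by
      refine Finset.disjoint_left.2 fun x hxA hxB => ?_
      have := hBS hxB
      simp only [mem_compl] at this
      exact this (hAS hxA)
    have hBSint : B ∩ S = ∅ := by
      refine Finset.eq_empty_of_forall_notMem fun x hx => ?_
      simp only [mem_inter] at hx
      have := hBS hx.1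
      simp only [mem_compl] at this
      exact this hx.2
    simp only [mem_coe, mem_filter, mem_univ, true_and]
    constructor
    · rw [card_union_of_disjoint hdisj, hAk, hBk]; omega
    · rw [union_inter_distrib_right, hBSint, union_empty,
        inter_eq_left.2 hAS, hAk]
  · intro T _
    ext x; simp only [mem_union, mem_inter, mem_sdiff]; tauto
  · rintro ⟨A, B⟩ hp
    simp only [mem_coe, mem_product, mem_powersetCard] at hp
    obtain ⟨⟨hAS, _⟩, hBS, _⟩ := hp
    have h1 : ∀ x ∈ B, x ∉ S := fun x hx => by
      have := hBS hx; simpa using this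
    have h2 : ∀ x ∈ A, x ∈ S := fun x hx => hAS hx
    ext x
    · simp only [mem_inter, mem_union]
      constructor
      · rintro ⟨h | h, hS'⟩
        · exact h
        · exact absurd hS' (h1 x h)
      · intro h; exact ⟨Or.inl h, h2 x h⟩
    · simp only [mem_sdiff, mem_union]
      constructor
      · rintro ⟨h | h, hS'⟩
        · exact absurd (h2 x h) hS'
        · exact h
      · intro h; exact ⟨Or.inr h, h1 x h⟩

lemma inner_sum2 (n j m : ℕ) (hm : m ≤ n) (S : Finset (Fin n)) (hS : S.card = m) :
    ∑ T ∈ univ.filter (fun T : Finset (Fin n) => T.card = j), (-1:ℝ)^((T ∩ S).card)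
      = ∑ k ∈ Icc (j + m - n) (min j m),
        (m.choose k : ℝ) * ((n - m).choose (j - k)) * (-1) ^ k := by
  have key : ∑ T ∈ univ.filter (fun T : Finset (Fin n) => T.card = j),
      (-1:ℝ)^((T ∩ S).card)
      = ∑ k ∈ range (j+1), (m.choose k : ℝ) * ((n - m).choose (j - k)) * (-1) ^ k := by
    rw [← Finset.sum_fiberwise_of_maps_to (g := fun T => (T ∩ S).card)
        (t := range (j+1)) ?_]
    · refine Finset.sum_congr rfl fun k hk => ?_
      rw [mem_range] at hk
      rw [Finset.filter_filter]
      have heq : ∑ T ∈ univ.filter (fun T : Finset (Fin n) => T.card = j ∧ (T ∩ S).card = k),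
          (-1:ℝ)^((T ∩ S).card)
          = ∑ _T ∈ univ.filter (fun T : Finset (Fin n) => T.card = j ∧ (T ∩ S).card = k),
          (-1:ℝ)^k := by
        refine Finset.sum_congr rfl fun T hT => ?_
        simp only [mem_filter] at hT
        rw [hT.2.2]
      rw [heq, Finset.sum_const, fiber_card n j k m S hS (by omega), nsmul_eq_mul]
      push_cast
      ring
    · intro T hT
      simp only [mem_filter, mem_univ, true_and] at hT
      simp only [mem_range]
      have : (T ∩ S).card ≤ T.card := card_le_card inter_subset_left
      omega
  rw [key]
  symm
  apply Finset.sum_subset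
  · intro k hk
    rw [mem_Icc] at hk
    rw [mem_range]
    omega
  · intro k hk hk2
    rw [mem_range] at hk
    rw [mem_Icc, not_and_or] at hk2
    rcases hk2 with h | h
    · push_neg at h
      have : (n - m).choose (j - k) = 0 := Nat.choose_eq_zero_of_lt (by omega)
      rw [this]; push_cast; ring
    · push_neg at h
      have : m.choose k = 0 := Nat.choose_eq_zero_of_lt (by omega)
      rw [this]; push_cast; ring

lemma sum_T (n a : ℕ) (S : Finset (Fin n)) :
    ∑ T : Finset (Fin n), (if T.card ≤ a then (-1:ℝ)^((T ∩ S).card) else 0)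
      = ∑ j ∈ range (a+1), ∑ T ∈ univ.filter (fun T : Finset (Fin n) => T.card = j),
          (-1:ℝ)^((T ∩ S).card) := by
  rw [← Finset.sum_filter]
  rw [← Finset.sum_fiberwise_of_maps_to (g := fun T : Finset (Fin n) => T.card)
      (t := range (a+1)) (fun T hT => by
        simp only [mem_filter, mem_univ, true_and] at hT
        simp only [mem_range]; omega)]
  refine Finset.sum_congr rfl fun j hj => ?_
  rw [mem_range] at hj
  rw [Finset.filter_filter]
  refine Finset.sum_congr ?_ fun _ _ => rfl
  ext T
  simp only [mem_filter, mem_univ, true_and]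
  constructor
  · rintro ⟨_, h⟩; exact h
  · intro h; exact ⟨by omega, h⟩

/-- If `z` has exactly `m` ones, the eigenvalue of `M_a` associated to `v_z` equals
`Σ_{j=0}^{a} Σ_{k=max(0,j+m-n)}^{min(j,m)} C(m,k) C(n-m, j-k) (-1)^k`. -/
theorem stmt_2 (n a m : ℕ) (ha : a ≤ n) (z : Fin n → Bool)
    (hm : (Finset.univ.filter (fun i => z i = true)).card = m) :
    (Matrix.of (fun x y : Fin n → Bool =>
        if hammingDist x y ≤ a then (1 : ℝ) else 0)).mulVec
      (fun x : Fin n → Bool =>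
        (-1 : ℝ) ^ (∑ i, (if x i = true ∧ z i = true then 1 else 0 : ℕ)))
    = (∑ j ∈ range (a + 1), ∑ k ∈ Icc (j + m - n) (min j m),
        (m.choose k : ℝ) * ((n - m).choose (j - k)) * (-1) ^ k) •
      (fun x : Fin n → Bool =>
        (-1 : ℝ) ^ (∑ i, (if x i = true ∧ z i = true then 1 else 0 : ℕ))) := by
  set S : Finset (Fin n) := univ.filter (fun i => z i = true) with hSdef
  have hmn : m ≤ n := by
    rw [← hm]
    simpa using (card_filter_le univ (fun i => z i = true)).trans (by simp)
  funext x
  simp only [Matrix.mulVec, dotProduct, Matrix.of_apply, Pi.smul_apply, smul_eq_mul]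
  -- reindex y = x ⊕ w
  have hinv : Function.Involutive (fun w : Fin n → Bool => fun i => xor (x i) (w i)) := by
    intro w; funext i; show xor (x i) (xor (x i) (w i)) = w i; cases x i <;> cases w i <;> rfl
  let e : (Fin n → Bool) ≃ (Fin n → Bool) := hinv.toPerm _
  rw [← Equiv.sum_comp e (fun y => (if hammingDist x y ≤ a then (1:ℝ) else 0) *
      (-1 : ℝ) ^ (∑ i, (if y i = true ∧ z i = true then 1 else 0 : ℕ)))]
  have step1 : ∀ w : Fin n → Bool,
      (if hammingDist x (e w) ≤ a then (1:ℝ) else 0) *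
        (-1 : ℝ) ^ (∑ i, (if (e w) i = true ∧ z i = true then 1 else 0 : ℕ))
      = (-1 : ℝ) ^ (∑ i, (if x i = true ∧ z i = true then 1 else 0 : ℕ)) *
        ((if (univ.filter (fun i => w i = true)).card ≤ a then (1:ℝ) else 0) *
          (-1 : ℝ) ^ (∑ i, (if w i = true ∧ z i = true then 1 else 0 : ℕ))) := by
    intro w
    have hew : e w = fun i => xor (x i) (w i) := rfl
    have hham : hammingDist x (e w) = (univ.filter (fun i => w i = true)).card := by
      rw [hew, hammingDist]
      congr 1
      ext i
      cases hx : x i <;> cases hw : w i <;> simp [hx, hw]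
    have hsign : (-1 : ℝ) ^ (∑ i, (if (e w) i = true ∧ z i = true then 1 else 0 : ℕ))
        = (-1 : ℝ) ^ (∑ i, (if x i = true ∧ z i = true then 1 else 0 : ℕ)) *
          (-1 : ℝ) ^ (∑ i, (if w i = true ∧ z i = true then 1 else 0 : ℕ)) := by
      rw [hew]
      rw [← Finset.prod_pow_eq_pow_sum, ← Finset.prod_pow_eq_pow_sum,
        ← Finset.prod_pow_eq_pow_sum, ← Finset.prod_mul_distrib]
      refine Finset.prod_congr rfl fun i _ => ?_
      cases hx : x i <;> cases hw : w i <;> cases hz : z i <;> simp [hx, hw, hz]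
    rw [hham, hsign]
    ring
  rw [Finset.sum_congr rfl (fun w _ => step1 w), ← Finset.mul_sum]
  rw [mul_comm]
  congr 1
  -- now: ∑ w, ite * (-1)^cnt = eigenvalue
  -- reindex w ↔ Finset
  let e2 : Finset (Fin n) ≃ (Fin n → Bool) :=
    { toFun := fun T => fun i => decide (i ∈ T)
      invFun := fun w => univ.filter (fun i => w i = true)
      left_inv := fun T => by ext i; simp
      right_inv := fun w => by funext i; simp }
  rw [← Equiv.sum_comp e2 (fun w => (if (univ.filter (fun i => w i = true)).card ≤ a
      then (1:ℝ) else 0) * (-1 : ℝ) ^ (∑ i, (if w i = true ∧ z i = true then 1 else 0 : ℕ)))]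
  have step2 : ∀ T : Finset (Fin n),
      (if (univ.filter (fun i => (e2 T) i = true)).card ≤ a then (1:ℝ) else 0) *
        (-1 : ℝ) ^ (∑ i, (if (e2 T) i = true ∧ z i = true then 1 else 0 : ℕ))
      = (if T.card ≤ a then (-1:ℝ)^((T ∩ S).card) else 0) := by
    intro T
    have h1 : univ.filter (fun i => (e2 T) i = true) = T := by ext i; simp [e2]
    have h2 : (∑ i, (if (e2 T) i = true ∧ z i = true then 1 else 0 : ℕ)) = (T ∩ S).card := by
      have hTS : T ∩ S = univ.filter (fun i => (e2 T) i = true ∧ z i = true) := by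
        ext i; simp [e2, hSdef]
      rw [hTS, Finset.card_filter]
    rw [h1, h2]
    split <;> simp
  rw [Finset.sum_congr rfl (fun T _ => step2 T), sum_T]
  exact Finset.sum_congr rfl fun j _ => inner_sum2 n j m hmn S hm
end

section
/- If z ∈ {0,1}^n has exactly m ones, then the eigenvalue of the matrix M_{=a} associated to the eigenvector v_z equals Σ_{k=max{0,a+m−n}}^{min{a,m}} C(m,k)·C(n−m, a−k)·(−1)^k. -/
open Finset Polynomial

lemma coeff_one_sub_X_pow (m k : ℕ) :
    ((1 - X : ℝ[X]) ^ m).coeff k = (-1 : ℝ) ^ k * m.choose k := by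
  have h : (1 - X : ℝ[X]) = (-1 : ℝ[X]) * (X + C (-1)) := by
    rw [C_neg, C_1]; ring
  have h1 : ((-1 : ℝ[X]) ^ m) = C ((-1 : ℝ) ^ m) := by simp
  rw [h, mul_pow, h1, coeff_C_mul, coeff_X_add_C_pow]
  rcases le_or_gt k m with hk | hk
  · have key : (-1 : ℝ) ^ m * (-1 : ℝ) ^ (m - k) = (-1 : ℝ) ^ k := by
      rw [← pow_add]
      have h2 : m + (m - k) = 2 * (m - k) + k := by omega
      rw [h2, pow_add, pow_mul]
      norm_num
    rw [← mul_assoc, key]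
  · rw [Nat.choose_eq_zero_of_lt hk]
    push_cast; ring

lemma lemA (n a m : ℕ) (ha : a ≤ n) (A : Finset (Fin n)) (hA : A.card = m) :
    ∑ S ∈ powersetCard a (univ : Finset (Fin n)), ((-1 : ℝ)) ^ (S ∩ A).card
    = ∑ k ∈ Icc (a + m - n) (min a m),
        (m.choose k : ℝ) * ((n - m).choose (a - k)) * (-1) ^ k := by
  classical
  have hmn : m ≤ n := by
    simpa [hA] using Finset.card_le_univ A
  set P : ℝ[X] := ∏ i : Fin n, (C (if i ∈ A then (-1 : ℝ) else 1) * X + 1) with hP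
  have h1 : P.coeff a = ∑ S ∈ powersetCard a (univ : Finset (Fin n)),
      ((-1 : ℝ)) ^ (S ∩ A).card := by
    rw [hP, Finset.prod_add, finset_sum_coeff, powersetCard_eq_filter, sum_filter]
    refine Finset.sum_congr rfl fun t _ => ?_
    rw [prod_const_one, mul_one, prod_mul_distrib, prod_const, ← map_prod,
      coeff_C_mul, coeff_X_pow]
    have hprod : (∏ i ∈ t, (if i ∈ A then (-1 : ℝ) else 1)) = (-1 : ℝ) ^ (t ∩ A).card := by
      rw [Finset.prod_ite_mem, prod_const]
    rw [hprod]
    by_cases h : t.card = a <;> simp [h, Ne.symm]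
  have h2 : P = (1 - X) ^ m * (1 + X) ^ (n - m) := by
    rw [hP]
    have hcongr : ∀ i ∈ (univ : Finset (Fin n)),
        (C (if i ∈ A then (-1 : ℝ) else 1) * X + 1)
          = if i ∈ A then (1 - X : ℝ[X]) else 1 + X := by
      intro i _
      split
      · rw [C_neg, C_1]; ring
      · rw [C_1]; ring
    rw [Finset.prod_congr rfl hcongr, Finset.prod_ite, prod_const, prod_const]
    have e1 : (univ.filter (· ∈ A)).card = m := by
      rw [Finset.filter_mem_eq_inter, univ_inter, hA]
    have e2 : (univ.filter (fun i => ¬ i ∈ A)).card = n - m := by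
      rw [Finset.filter_not, card_sdiff_of_subset (filter_subset _ _),
        Finset.filter_mem_eq_inter, univ_inter, hA, card_univ, Fintype.card_fin]
    rw [e1, e2]
  have h3 : P.coeff a = ∑ k ∈ Finset.range (a + 1),
      ((-1 : ℝ) ^ k * m.choose k) * ((n - m).choose (a - k)) := by
    rw [h2, coeff_mul, Finset.Nat.sum_antidiagonal_eq_sum_range_succ_mk]
    refine Finset.sum_congr rfl fun k _ => ?_
    rw [coeff_one_sub_X_pow, coeff_one_add_X_pow]
  rw [h1] at h3
  rw [h3]
  rw [← Finset.sum_subset (s₁ := Icc (a + m - n) (min a m)) (s₂ := Finset.range (a + 1))]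
  · exact Finset.sum_congr rfl fun k _ => by ring
  · intro k hk
    simp only [mem_Icc, mem_range] at hk ⊢
    omega
  · intro k hk hk'
    simp only [mem_Icc, mem_range, not_and, not_le] at hk hk'
    rcases le_or_gt k (min a m) with h | h
    · have h2 : a - k > n - m := by omega
      rw [Nat.choose_eq_zero_of_lt h2]
      push_cast; ring
    · have h2 : m < k := by omega
      rw [Nat.choose_eq_zero_of_lt h2]
      push_cast; ring

/-- If `z` has exactly `m` ones, the eigenvalue of `M_{=a}` associated to `v_z` equals
`Σ_{k=max(0,a+m-n)}^{min(a,m)} C(m,k) C(n-m, a-k) (-1)^k`. -/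
theorem stmt_3 (n a m : ℕ) (ha : a ≤ n) (z : Fin n → Bool)
    (hm : (Finset.univ.filter (fun i => z i = true)).card = m) :
    (Matrix.of (fun x y : Fin n → Bool =>
        if hammingDist x y = a then (1 : ℝ) else 0)).mulVec
      (fun x : Fin n → Bool =>
        (-1 : ℝ) ^ (∑ i, (if x i = true ∧ z i = true then 1 else 0 : ℕ)))
    = (∑ k ∈ Icc (a + m - n) (min a m),
        (m.choose k : ℝ) * ((n - m).choose (a - k)) * (-1) ^ k) •
      (fun x : Fin n → Bool =>
        (-1 : ℝ) ^ (∑ i, (if x i = true ∧ z i = true then 1 else 0 : ℕ))) := by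
  classical
  set A : Finset (Fin n) := univ.filter (fun i => z i = true) with hAdef
  funext x
  simp only [Matrix.mulVec, Matrix.of_apply, Pi.smul_apply, smul_eq_mul, dotProduct]
  -- reindex y = x xor e
  have hinv : Function.Involutive (fun (e : Fin n → Bool) => fun i => xor (x i) (e i)) := by
    intro e; funext i
    show (x i ^^ (x i ^^ e i)) = e i
    cases x i <;> cases e i <;> rfl
  set σ : Equiv.Perm (Fin n → Bool) := hinv.toPerm _ with hσ
  rw [← Equiv.sum_comp σ (fun y => (if hammingDist x y = a then (1:ℝ) else 0) *
      (-1 : ℝ) ^ (∑ i, (if y i = true ∧ z i = true then 1 else 0 : ℕ)))]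
  have hham : ∀ e : Fin n → Bool,
      hammingDist x (fun i => xor (x i) (e i)) = (univ.filter (fun i => e i = true)).card := by
    intro e
    unfold hammingDist
    congr 1
    apply Finset.filter_congr
    intro i _
    cases hx : x i <;> cases he : e i <;> simp [hx, he]
  have hpar : ∀ e : Fin n → Bool,
      ((-1 : ℝ)) ^ (∑ i, (if (xor (x i) (e i)) = true ∧ z i = true then 1 else 0 : ℕ))
      = (-1 : ℝ) ^ (∑ i, (if x i = true ∧ z i = true then 1 else 0 : ℕ)) *
        (-1 : ℝ) ^ (∑ i, (if e i = true ∧ z i = true then 1 else 0 : ℕ)) := by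
    intro e
    rw [← pow_add, ← Finset.sum_add_distrib, ← Finset.prod_pow_eq_pow_sum,
      ← Finset.prod_pow_eq_pow_sum]
    refine Finset.prod_congr rfl fun i _ => ?_
    cases hx : x i <;> cases he : e i <;> cases hz : z i <;> simp [hx, he, hz]
  have hwe : ∀ e : Fin n → Bool,
      (∑ i, (if e i = true ∧ z i = true then 1 else 0 : ℕ))
        = ((univ.filter (fun i => e i = true)) ∩ A).card := by
    intro e
    rw [hAdef, ← Finset.filter_and, Finset.card_filter]
  have hstep : ∀ e : Fin n → Bool,
      (fun y => (if hammingDist x y = a then (1:ℝ) else 0) *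
        (-1 : ℝ) ^ (∑ i, (if y i = true ∧ z i = true then 1 else 0 : ℕ))) (σ e)
      = (-1 : ℝ) ^ (∑ i, (if x i = true ∧ z i = true then 1 else 0 : ℕ)) *
        ((if (univ.filter (fun i => e i = true)).card = a then (1:ℝ) else 0) *
          (-1 : ℝ) ^ ((univ.filter (fun i => e i = true)) ∩ A).card) := by
    intro e
    have happ : σ e = fun i => xor (x i) (e i) := congrFun (hinv.coe_toPerm) e
    rw [happ]
    simp only [hham e, hpar e, hwe e]
    ring
  rw [Finset.sum_congr rfl (fun e _ => hstep e), ← Finset.mul_sum]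
  -- reindex e ↦ S
  set τ : (Fin n → Bool) ≃ Finset (Fin n) :=
    { toFun := fun e => univ.filter (fun i => e i = true)
      invFun := fun S => fun i => decide (i ∈ S)
      left_inv := by intro e; funext i; simp
      right_inv := by intro S; ext i; simp } with hτ
  rw [← Equiv.sum_comp τ.symm (fun e =>
      (if (univ.filter (fun i => e i = true)).card = a then (1:ℝ) else 0) *
        (-1 : ℝ) ^ ((univ.filter (fun i => e i = true)) ∩ A).card)]
  have hτs : ∀ S : Finset (Fin n), univ.filter (fun i => (τ.symm S) i = true) = S := by
    intro S; ext i; simp [hτ]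
  simp only [hτs]
  have hfin : (∑ S : Finset (Fin n), (if S.card = a then (1:ℝ) else 0) * (-1:ℝ) ^ (S ∩ A).card)
      = ∑ S ∈ powersetCard a (univ : Finset (Fin n)), ((-1 : ℝ)) ^ (S ∩ A).card := by
    rw [powersetCard_eq_filter, powerset_univ, sum_filter]
    refine Finset.sum_congr rfl fun S _ => ?_
    by_cases h : S.card = a <;> simp [h]
  rw [hfin, lemA n a m ha A (by rw [hAdef] at hm ⊢; exact hm)]
  ring
end

section
/- For fixed a and n, the function m ↦ F(a,n,m) := Σ_{j=0}^{a} Σ_{k=max{0,j+m−n}}^{min{j,m}} C(m,k)·C(n−m, j−k)·(−1)^k agrees with a polynomial in m of degree at most a; hence there are at most a values of m ∈ {0,...,n} with F(a,n,m) = 0. -/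
open Finset

/-- `F(a,n,m)` agrees with a polynomial in `m` of degree at most `a`; hence there are
at most `a` values of `m ∈ {0,…,n}` with `F(a,n,m) = 0`. -/
theorem stmt_4 (a n : ℕ) (ha : a ≤ n)
    (F : ℕ → ℕ → ℕ → ℝ)
    (hF : ∀ a n m, F a n m = ∑ j ∈ range (a + 1), ∑ k ∈ Icc (j + m - n) (min j m),
        (m.choose k : ℝ) * ((n - m).choose (j - k)) * (-1) ^ k) :
    (∃ P : Polynomial ℝ, P.natDegree ≤ a ∧ ∀ m ≤ n, P.eval (m : ℝ) = F a n m) ∧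
    ((range (n + 1)).filter (fun m => F a n m = 0)).card ≤ a := by
  classical
  set Q : ℕ → ℕ → Polynomial ℝ := fun j k =>
    (((-1 : ℝ) ^ k / (k.factorial * (j - k).factorial)) •
      (descPochhammer ℝ k * (descPochhammer ℝ (j - k)).comp
        (Polynomial.C (n : ℝ) - Polynomial.X))) with hQ
  set P : Polynomial ℝ := ∑ j ∈ range (a + 1), ∑ k ∈ range (j + 1), Q j k with hP
  have hCnX : (Polynomial.C (n : ℝ) - Polynomial.X).natDegree = 1 := by
    rw [show Polynomial.C (n : ℝ) - Polynomial.X = -(Polynomial.X - Polynomial.C (n : ℝ)) by ring,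
      Polynomial.natDegree_neg, Polynomial.natDegree_X_sub_C]
  -- degree bound
  have hdeg : P.natDegree ≤ a := by
    refine Polynomial.natDegree_sum_le_of_forall_le _ _ fun j hj => ?_
    refine Polynomial.natDegree_sum_le_of_forall_le _ _ fun k hk => ?_
    simp only [hQ]
    refine le_trans (Polynomial.natDegree_smul_le _ _) ?_
    refine le_trans (Polynomial.natDegree_mul_le) ?_
    rw [Polynomial.natDegree_comp, hCnX, mul_one, descPochhammer_natDegree,
      descPochhammer_natDegree]
    have hk' : k ≤ j := Nat.lt_succ_iff.mp (mem_range.mp hk)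
    have hj' : j ≤ a := Nat.lt_succ_iff.mp (mem_range.mp hj)
    omega
  -- evaluation of Q
  have hQeval : ∀ j k (m : ℕ), m ≤ n → (Q j k).eval (m : ℝ) =
      (m.choose k : ℝ) * ((n - m).choose (j - k)) * (-1) ^ k := by
    intro j k m hm
    have hcast : ((n : ℝ) - m) = ((n - m : ℕ) : ℝ) := by
      rw [Nat.cast_sub hm]
    simp only [hQ, Polynomial.eval_smul, Polynomial.eval_mul, Polynomial.eval_comp,
      Polynomial.eval_sub, Polynomial.eval_C, Polynomial.eval_X, smul_eq_mul, hcast,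
      descPochhammer_eval_eq_descFactorial]
    rw [Nat.descFactorial_eq_factorial_mul_choose m k,
      Nat.descFactorial_eq_factorial_mul_choose (n - m) (j - k)]
    push_cast
    have h1 : (k.factorial : ℝ) ≠ 0 := Nat.cast_ne_zero.mpr k.factorial_ne_zero
    have h2 : ((j - k).factorial : ℝ) ≠ 0 := Nat.cast_ne_zero.mpr (j - k).factorial_ne_zero
    field_simp
  -- evaluation of P
  have hPeval : ∀ m ≤ n, P.eval (m : ℝ) = F a n m := by
    intro m hm
    rw [hF, hP, Polynomial.eval_finset_sum]
    refine Finset.sum_congr rfl fun j hj => ?_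
    rw [Polynomial.eval_finset_sum]
    have h1 : ∀ k ∈ range (j + 1), (Q j k).eval (m : ℝ) =
        (m.choose k : ℝ) * ((n - m).choose (j - k)) * (-1) ^ k :=
      fun k _ => hQeval j k m hm
    rw [Finset.sum_congr rfl h1]
    refine (Finset.sum_subset ?_ ?_).symm
    · intro k hk
      rw [mem_Icc] at hk
      rw [mem_range]
      omega
    · intro k hk hk'
      rw [mem_range] at hk
      rw [mem_Icc, not_and_or] at hk'
      rcases hk' with h | h
      · push_neg at h
        have : n - m < j - k := by omega
        rw [Nat.choose_eq_zero_of_lt this]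
        simp
      · push_neg at h
        have hkm : m < k := by omega
        rw [Nat.choose_eq_zero_of_lt hkm]
        simp
  -- P is nonzero: P.eval 0 = ∑ C(n,j) > 0
  have hP0 : P.eval ((0 : ℕ) : ℝ) = F a n 0 := hPeval 0 (Nat.zero_le n)
  have hF0 : F a n 0 = ∑ j ∈ range (a + 1), (n.choose j : ℝ) := by
    rw [hF]
    refine Finset.sum_congr rfl fun j hj => ?_
    have hj' : j ≤ a := Nat.lt_succ_iff.mp (mem_range.mp hj)
    have : j + 0 - n = 0 := by omega
    rw [this, Nat.min_zero, Finset.Icc_self, Finset.sum_singleton]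
    simp
  have hF0pos : 0 < F a n 0 := by
    rw [hF0]
    refine Finset.sum_pos' (fun j _ => by positivity) ⟨0, mem_range.mpr (Nat.succ_pos a), ?_⟩
    simp
  have hPne : P ≠ 0 := by
    intro h
    rw [h] at hP0
    simp at hP0
    rw [← hP0] at hF0pos
    exact lt_irrefl 0 hF0pos
  refine ⟨⟨P, hdeg, hPeval⟩, ?_⟩
  -- counting roots
  set S := (range (n + 1)).filter (fun m => F a n m = 0) with hS
  have hinj : Set.InjOn (fun m : ℕ => (m : ℝ)) S := fun x _ y _ h => Nat.cast_injective h
  have hcard : S.card = (S.image (fun m : ℕ => (m : ℝ))).card :=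
    (Finset.card_image_of_injOn hinj).symm
  have hsub : S.image (fun m : ℕ => (m : ℝ)) ⊆ P.roots.toFinset := by
    intro x hx
    rw [Finset.mem_image] at hx
    obtain ⟨m, hm, rfl⟩ := hx
    rw [hS, Finset.mem_filter, Finset.mem_range] at hm
    rw [Multiset.mem_toFinset, Polynomial.mem_roots hPne]
    rw [Polynomial.IsRoot, hPeval m (by omega), hm.2]
  calc S.card = (S.image (fun m : ℕ => (m : ℝ))).card := hcard
    _ ≤ P.roots.toFinset.card := Finset.card_le_card hsub
    _ ≤ Multiset.card P.roots := Multiset.toFinset_card_le _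
    _ ≤ P.natDegree := P.card_roots'
    _ ≤ a := hdeg
end

section
/- For fixed a and n with 0 ≤ a ≤ n, the number of values of m ∈ {0,...,n} for which f(a,n,m) := Σ_{k=0}^{a} C(m,k)·C(n−m, a−k)·(−1)^k equals 0 is at most a. -/
open Finset Polynomial

private noncomputable def krawP (a n : ℕ) : Polynomial ℚ :=
  ∑ k ∈ range (a + 1),
    Polynomial.C ((-1 : ℚ) ^ k / (k.factorial * (a - k).factorial)) *
      descPochhammer ℚ k *
      (descPochhammer ℚ (a - k)).comp (Polynomial.C (n : ℚ) - Polynomial.X)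

private lemma krawP_coeff (a n : ℕ) :
    (krawP a n).coeff a = (-1 : ℚ) ^ a * ∑ k ∈ range (a + 1),
      (1 : ℚ) / (k.factorial * (a - k).factorial) := by
  have hdeg1 : (Polynomial.C (n : ℚ) - Polynomial.X).natDegree = 1 := by
    rw [show Polynomial.C (n : ℚ) - Polynomial.X = -(Polynomial.X - Polynomial.C (n:ℚ)) by ring,
      natDegree_neg, natDegree_X_sub_C]
  have hlc1 : (Polynomial.C (n : ℚ) - Polynomial.X).leadingCoeff = -1 := by
    rw [show Polynomial.C (n : ℚ) - Polynomial.X = -(Polynomial.X - Polynomial.C (n:ℚ)) by ring,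
      leadingCoeff_neg, (monic_X_sub_C (n:ℚ)).leadingCoeff]
  rw [krawP, finset_sum_coeff, Finset.mul_sum]
  apply Finset.sum_congr rfl
  intro k hk
  simp only [Finset.mem_range, Nat.lt_succ_iff] at hk
  set D := descPochhammer ℚ k with hD
  set E := (descPochhammer ℚ (a - k)).comp (Polynomial.C (n : ℚ) - Polynomial.X) with hE
  have hDm : D.Monic := monic_descPochhammer ℚ k
  have hDdeg : D.natDegree = k := descPochhammer_natDegree ℚ k
  have hEdeg : E.natDegree = a - k := by
    rw [hE, natDegree_comp, descPochhammer_natDegree, hdeg1, mul_one]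
  have hElc : E.leadingCoeff = (-1 : ℚ) ^ (a - k) := by
    rw [hE, leadingCoeff_comp (by rw [hdeg1]; exact one_ne_zero),
      (monic_descPochhammer ℚ (a-k)).leadingCoeff, hlc1, descPochhammer_natDegree, one_mul]
  have hE0 : E ≠ 0 := leadingCoeff_ne_zero.mp (by
    rw [hElc]; exact pow_ne_zero _ (by norm_num))
  have hDEdeg : (D * E).natDegree = a := by
    rw [natDegree_mul hDm.ne_zero hE0, hDdeg, hEdeg]
    omega
  have hDElc : (D * E).leadingCoeff = (-1 : ℚ) ^ (a - k) := by
    rw [leadingCoeff_mul, hDm.leadingCoeff, hElc, one_mul]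
  rw [mul_assoc, coeff_C_mul, show ((D*E).coeff a) = (D*E).leadingCoeff by
    rw [Polynomial.leadingCoeff, hDEdeg], hDElc]
  rw [div_mul_eq_mul_div, ← pow_add, show k + (a - k) = a by omega, mul_one_div]

private lemma krawP_natDegree_le (a n : ℕ) : (krawP a n).natDegree ≤ a := by
  have hdeg1 : (Polynomial.C (n : ℚ) - Polynomial.X).natDegree = 1 := by
    rw [show Polynomial.C (n : ℚ) - Polynomial.X = -(Polynomial.X - Polynomial.C (n:ℚ)) by ring,
      natDegree_neg, natDegree_X_sub_C]
  apply Polynomial.natDegree_sum_le_of_forall_le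
  intro k hk
  simp only [Finset.mem_range, Nat.lt_succ_iff] at hk
  calc (Polynomial.C ((-1 : ℚ) ^ k / (k.factorial * (a - k).factorial)) *
      descPochhammer ℚ k *
      (descPochhammer ℚ (a - k)).comp (Polynomial.C (n : ℚ) - Polynomial.X)).natDegree
      ≤ (Polynomial.C ((-1 : ℚ) ^ k / (k.factorial * (a - k).factorial)) *
        descPochhammer ℚ k).natDegree +
        ((descPochhammer ℚ (a - k)).comp (Polynomial.C (n : ℚ) - Polynomial.X)).natDegree :=
      natDegree_mul_le
    _ ≤ k + (a - k) := by
        rw [natDegree_comp, descPochhammer_natDegree, hdeg1, mul_one]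
        gcongr
        exact (natDegree_C_mul_le _ _).trans (le_of_eq (descPochhammer_natDegree ℚ k))
    _ ≤ a := by omega

private lemma krawP_eval (a n m : ℕ) (hm : m ≤ n) :
    (krawP a n).eval (m : ℚ) =
      ∑ k ∈ range (a + 1),
        (m.choose k : ℚ) * ((n - m).choose (a - k)) * (-1) ^ k := by
  rw [krawP, eval_finset_sum]
  apply Finset.sum_congr rfl
  intro k _
  rw [eval_mul, eval_mul, eval_C, eval_comp, eval_sub, eval_C, eval_X]
  rw [show (n : ℚ) - m = ((n - m : ℕ) : ℚ) by push_cast [Nat.cast_sub hm]; ring]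
  rw [descPochhammer_eval_eq_descFactorial, descPochhammer_eval_eq_descFactorial,
    Nat.descFactorial_eq_factorial_mul_choose, Nat.descFactorial_eq_factorial_mul_choose]
  have h1 : (k.factorial : ℚ) ≠ 0 := Nat.cast_ne_zero.mpr k.factorial_ne_zero
  have h2 : ((a - k).factorial : ℚ) ≠ 0 := Nat.cast_ne_zero.mpr (a - k).factorial_ne_zero
  push_cast
  field_simp

/-- The number of `m ∈ {0,…,n}` with `f(a,n,m) = Σ_{k=0}^{a} C(m,k) C(n-m,a-k) (-1)^k = 0`
is at most `a`. -/
theorem stmt_5 (a n : ℕ) (ha : a ≤ n) :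
    ((range (n + 1)).filter (fun m =>
      (∑ k ∈ range (a + 1),
        (m.choose k : ℤ) * ((n - m).choose (a - k)) * (-1) ^ k) = 0)).card ≤ a := by
  classical
  set P := krawP a n with hP
  have hcoeff : P.coeff a ≠ 0 := by
    rw [hP, krawP_coeff]
    apply mul_ne_zero (pow_ne_zero _ (by norm_num))
    have hpos : (0 : ℚ) < ∑ k ∈ range (a + 1),
        (1 : ℚ) / (k.factorial * (a - k).factorial) := by
      apply Finset.sum_pos
      · intro k _
        positivity
      · exact ⟨0, Finset.mem_range.mpr (Nat.succ_pos a)⟩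
    exact ne_of_gt hpos
  have hP0 : P ≠ 0 := fun h => hcoeff (by rw [h, coeff_zero])
  have hdeg : P.natDegree = a :=
    le_antisymm (krawP_natDegree_le a n) (le_natDegree_of_ne_zero hcoeff)
  set S := (range (n + 1)).filter (fun m =>
      (∑ k ∈ range (a + 1),
        (m.choose k : ℤ) * ((n - m).choose (a - k)) * (-1) ^ k) = 0) with hS
  have hinj : Set.InjOn (fun m : ℕ => (m : ℚ)) S := fun x _ y _ h => Nat.cast_injective h
  have hcard : S.card = (S.image (fun m : ℕ => (m : ℚ))).card :=
    (Finset.card_image_of_injOn hinj).symm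
  rw [hcard, ← hdeg]
  apply Polynomial.card_le_degree_of_subset_roots
  intro x hx
  simp only [Finset.image_val, Multiset.mem_dedup, Multiset.mem_map] at hx
  obtain ⟨m, hm, rfl⟩ := hx
  simp only [hS, Finset.mem_val, Finset.mem_filter, Finset.mem_range, Nat.lt_succ_iff] at hm
  obtain ⟨hmn, hzero⟩ := hm
  rw [mem_roots hP0]
  show P.IsRoot (m : ℚ)
  unfold Polynomial.IsRoot
  rw [hP, krawP_eval a n m hmn]
  have := congrArg (fun z : ℤ => (z : ℚ)) hzero
  push_cast at this ⊢
  convert this using 2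
end

section
/- For 0 ≤ a ≤ m ≤ n, the identity f(a,m+1,n) = ((m+1)/(n−m))·((n+1−a)·h(a,m,n) − f(a,m,n)) holds, where f(a,m,n) = Σ_{i=0}^{a} C(m,i)·C(n−m, a−i)·(−1)^i and h(a,m,n) = Σ_{i=0}^{a} C(m,i)·C(n−m, a−i)·(−1)^i/(m−i+1). In particular, if f(a,m,n)=0 then f(a,m+1,n)=0 if and only if h(a,m,n)=0. -/
open Finset

/-- `f(a,m,n) = Σ_{i=0}^a C(m,i) C(n-m,a-i) (-1)^i` (rational values). -/
noncomputable def fQ (a m n : ℕ) : ℚ :=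
  ∑ i ∈ range (a + 1), (m.choose i : ℚ) * ((n - m).choose (a - i)) * (-1) ^ i

/-- `h(a,m,n) = Σ_{i=0}^a C(m,i) C(n-m,a-i) (-1)^i/(m-i+1)`. -/
noncomputable def hQ (a m n : ℕ) : ℚ :=
  ∑ i ∈ range (a + 1),
    (m.choose i : ℚ) * ((n - m).choose (a - i)) * (-1) ^ i / ((m : ℚ) - i + 1)

lemma keyR1 (m i : ℕ) (h : i ≤ m) :
    ((m+1).choose i : ℚ) * ((m : ℚ) + 1 - i) = ((m : ℚ) + 1) * (m.choose i : ℚ) := by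
  have h1 : (m + 1).choose i * (m + 1 - i) = (m + 1) * m.choose i := by
    have h2 := Nat.add_one_mul_choose_eq m (m - i)
    have e1 : m.choose (m - i) = m.choose i := Nat.choose_symm h
    have e2 : (m+1).choose (m+1-i) = (m+1).choose i := Nat.choose_symm (by omega)
    have e3 : m - i + 1 = m + 1 - i := by omega
    rw [e1, e3] at h2
    rw [e2] at h2
    exact h2.symm
  have := congrArg (Nat.cast : ℕ → ℚ) h1
  push_cast [Nat.cast_sub (show i ≤ m + 1 by omega)] at this
  linarith [this]

lemma keyR2 (N k : ℕ) (hN : 1 ≤ N) :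
    (N : ℚ) * ((N - 1).choose k : ℚ) = ((N : ℚ) - k) * (N.choose k : ℚ) := by
  rcases le_or_gt k N with hk | hk
  · have h := Nat.choose_mul_succ_eq (N - 1) k
    have h2 : N - 1 + 1 = N := Nat.succ_pred_eq_of_pos hN
    rw [h2] at h
    have := congrArg (Nat.cast : ℕ → ℚ) h
    push_cast [Nat.cast_sub hk] at this
    linarith [this]
  · rw [Nat.choose_eq_zero_of_lt hk, Nat.choose_eq_zero_of_lt (by omega)]
    simp

lemma key (a m n : ℕ) (ham : a ≤ m) (hmn : m < n) :
    ((n : ℚ) - m) * fQ a (m + 1) n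
      = ((m : ℚ) + 1) * (((n : ℚ) + 1 - a) * hQ a m n - fQ a m n) := by
  unfold fQ hQ
  rw [mul_sum, mul_sum, ← sum_sub_distrib, mul_sum]
  refine sum_congr rfl fun i hi => ?_
  have hia : i ≤ a := by simpa [Nat.lt_succ_iff] using hi
  have him : i ≤ m := hia.trans ham
  have hd : (m : ℚ) - i + 1 ≠ 0 := by
    have : (i : ℚ) ≤ m := by exact_mod_cast him
    intro h; nlinarith
  have r1 := keyR1 m i him
  have r2 := keyR2 (n - m) (a - i) (by omega)
  have e1 : n - (m + 1) = n - m - 1 := by omega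
  have e2 : ((n - m : ℕ) : ℚ) = (n : ℚ) - m := by
    push_cast [Nat.cast_sub hmn.le]; ring
  have e3 : ((a - i : ℕ) : ℚ) = (a : ℚ) - i := by
    push_cast [Nat.cast_sub hia]; ring
  rw [e1]
  rw [e2, e3] at r2
  field_simp
  linear_combination (((n:ℚ)-m-a+i) * (((n-m).choose (a-i) : ℚ))) * r1 +
    (((m:ℚ)-i+1) * (((m+1).choose i : ℚ))) * r2

/-- For `0 ≤ a ≤ m < n`, `f(a,m+1,n) = ((m+1)/(n-m))((n+1-a) h(a,m,n) - f(a,m,n))`;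
in particular, if `f(a,m,n)=0` then `f(a,m+1,n)=0 ↔ h(a,m,n)=0`. -/
theorem stmt_6 (a m n : ℕ) (ham : a ≤ m) (hmn : m < n) :
    fQ a (m + 1) n
      = (((m : ℚ) + 1) / ((n : ℚ) - m)) * (((n : ℚ) + 1 - a) * hQ a m n - fQ a m n) ∧
    (fQ a m n = 0 → (fQ a (m + 1) n = 0 ↔ hQ a m n = 0)) := by
  have hnm : (n : ℚ) - m ≠ 0 := by
    have : (m : ℚ) < n := by exact_mod_cast hmn
    intro h; linarith
  have hk := key a m n ham hmn
  have h1 : fQ a (m + 1) n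
      = (((m : ℚ) + 1) / ((n : ℚ) - m)) * (((n : ℚ) + 1 - a) * hQ a m n - fQ a m n) := by
    field_simp
    linarith [hk]
  refine ⟨h1, fun hf => ?_⟩
  rw [h1, hf, sub_zero]
  have hma : (m : ℚ) + 1 ≠ 0 := by positivity
  have hna : (n : ℚ) + 1 - a ≠ 0 := by
    have : (a : ℚ) ≤ m := by exact_mod_cast ham
    have : (m : ℚ) < n := by exact_mod_cast hmn
    intro h; linarith
  constructor
  · intro h
    rcases mul_eq_zero.mp h with h' | h'
    · exact absurd h' (div_ne_zero hma hnm)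
    · rcases mul_eq_zero.mp h' with h'' | h''
      · exact absurd h'' hna
      · exact h''
  · intro h; rw [h, mul_zero, mul_zero]
end

section
/- For 0 ≤ a ≤ m ≤ n, h(a,m,n) = (−1)^m times the coefficient of x^a in the polynomial g(x) = ((x^{m+1} − (x−1)^{m+1})/(m+1))·(x+1)^{n−m}. -/
open Finset Polynomial

/-- For `0 ≤ a ≤ m ≤ n`, `h(a,m,n)` equals `(-1)^m` times the coefficient of `x^a` in
`g(x) = ((x^{m+1} - (x-1)^{m+1})/(m+1)) (x+1)^{n-m}`. -/
theorem stmt_7 (a m n : ℕ) (ham : a ≤ m) (hmn : m ≤ n) :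
    hQ a m n = (-1 : ℚ) ^ m *
      ((Polynomial.C (((m : ℚ) + 1)⁻¹) * (X ^ (m + 1) - (X - 1) ^ (m + 1)) *
        (X + 1) ^ (n - m)).coeff a) := by
  rw [Polynomial.coeff_mul, Finset.Nat.sum_antidiagonal_eq_sum_range_succ_mk,
    Finset.mul_sum]
  unfold hQ
  apply Finset.sum_congr rfl
  intro i hi
  simp only [Finset.mem_range, Nat.lt_succ_iff] at hi
  have him : i ≤ m := hi.trans ham
  have hx : (X - 1 : ℚ[X]) = X + C (-1) := by rw [map_neg, map_one, sub_eq_add_neg]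
  rw [coeff_C_mul, coeff_sub, hx, coeff_X_add_C_pow, coeff_X_add_one_pow,
    coeff_X_pow]
  have hne : i ≠ m + 1 := by omega
  simp only [hne, if_false]
  have hkeyQ : (m.choose i : ℚ) * ((m:ℚ) + 1) = ((m + 1).choose i) * ((m:ℚ) + 1 - i) := by
    have h := Nat.choose_mul_succ_eq m i
    have h' := congrArg (Nat.cast : ℕ → ℚ) h
    push_cast [Nat.cast_sub (show i ≤ m + 1 by omega)] at h'
    linarith
  have h1 : ((m : ℚ) - i + 1) ≠ 0 := by
    have : ((m:ℚ) - i + 1) = ((m + 1 - i : ℕ) : ℚ) := by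
      push_cast [Nat.cast_sub (show i ≤ m + 1 by omega)]; ring
    rw [this]
    exact_mod_cast Nat.sub_ne_zero_of_lt (by omega)
  have h2 : ((m : ℚ) + 1) ≠ 0 := by positivity
  have hsign : (-1 : ℚ) ^ m * (-1 : ℚ) ^ (m + 1 - i) = -(-1 : ℚ) ^ i := by
    have hexp : m + (m + 1 - i) = 2 * (m - i) + i + 1 := by omega
    rw [← pow_add, hexp, pow_succ, pow_add, pow_mul]
    simp
  field_simp
  linear_combination (((n - m).choose (a - i) : ℚ) * (-1:ℚ)^i) * hkeyQ -
    (((m+1).choose i : ℚ) * ((n - m).choose (a - i) : ℚ) * ((m:ℚ) + 1 - i)) * hsign + (2 * (((m+1).choose i : ℚ) * ((n - m).choose (a - i) : ℚ) * ((m:ℚ) + 1 - i))) * hsign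
end

section
/- For 0 ≤ a ≤ m ≤ n, h(a,m,n) = ((−1)^{m+1}/(m+1)) · φ(n−m, m+1, a)/a!, where φ(u,v,w) is the w-th derivative of (x+1)^u (x−1)^v evaluated at x = 0. In particular, h(a,m,n)=0 if and only if φ(n−m, m+1, a)=0. -/
open Finset Polynomial

/-- `φ(u,v,w)` is the `w`-th derivative of `(x+1)^u (x-1)^v` evaluated at `x = 0`. -/
noncomputable def phi (u v w : ℕ) : ℚ :=
  ((Polynomial.derivative)^[w] ((X + 1) ^ u * (X - 1) ^ v) : Polynomial ℚ).eval 0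

lemma phi_eq (u v a : ℕ) :
    phi u v a = (a.factorial : ℚ) *
      ∑ i ∈ range (a + 1), (u.choose i : ℚ) * ((-1) ^ (v - (a - i)) * (v.choose (a - i))) := by
  rw [phi, ← Polynomial.coeff_zero_eq_eval_zero, Polynomial.coeff_iterate_derivative]
  rw [Polynomial.coeff_mul, Finset.Nat.sum_antidiagonal_eq_sum_range_succ_mk]
  simp only [zero_add, Nat.descFactorial_self, nsmul_eq_mul, Finset.mul_sum]
  refine Finset.sum_congr rfl fun i _ => ?_
  have h1 : ((X + 1 : ℚ[X]) ^ u).coeff i = (u.choose i : ℚ) := coeff_X_add_one_pow ℚ u i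
  have h2 : ((X - 1 : ℚ[X]) ^ v).coeff (a - i) = (-1) ^ (v - (a - i)) * (v.choose (a - i) : ℚ) := by
    have : (X - 1 : ℚ[X]) = X + C (-1) := by rw [map_neg, C_1]; ring
    rw [this, coeff_X_add_C_pow]
  rw [h1, h2]

/-- For `0 ≤ a ≤ m ≤ n`, `h(a,m,n) = ((-1)^{m+1}/(m+1)) φ(n-m,m+1,a)/a!`;
in particular `h(a,m,n) = 0 ↔ φ(n-m,m+1,a) = 0`. -/
theorem stmt_8 (a m n : ℕ) (ham : a ≤ m) (hmn : m ≤ n) :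
    hQ a m n = ((-1 : ℚ) ^ (m + 1) / ((m : ℚ) + 1)) * (phi (n - m) (m + 1) a / (a.factorial : ℚ)) ∧
    (hQ a m n = 0 ↔ phi (n - m) (m + 1) a = 0) := by
  have hfac : (a.factorial : ℚ) ≠ 0 := Nat.cast_ne_zero.mpr a.factorial_ne_zero
  have key : hQ a m n
      = ((-1 : ℚ) ^ (m + 1) / ((m : ℚ) + 1)) * (phi (n - m) (m + 1) a / (a.factorial : ℚ)) := by
    rw [phi_eq, mul_div_cancel_left₀ _ hfac, hQ, Finset.mul_sum]
    conv_rhs => rw [← Finset.sum_range_reflect]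
    simp only [Nat.add_sub_cancel]
    refine Finset.sum_congr rfl fun i hi => ?_
    rw [Finset.mem_range, Nat.lt_succ_iff] at hi
    have hia : a - (a - i) = i := Nat.sub_sub_self hi
    rw [hia]
    have him : i ≤ m := hi.trans ham
    have h1 : ((m : ℚ) - i + 1) = ((m + 1 - i : ℕ) : ℚ) := by
      push_cast [Nat.cast_sub (him.trans (Nat.le_succ m))]
      ring
    have h2 : ((m + 1 - i : ℕ) : ℚ) ≠ 0 := by
      have : 0 < m + 1 - i := by omega
      exact_mod_cast this.ne'
    have hsign : ((-1 : ℚ)) ^ (m + 1 - i) * (-1 : ℚ) ^ i = (-1 : ℚ) ^ (m + 1) := by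
      rw [← pow_add, Nat.sub_add_cancel (him.trans (Nat.le_succ m))]
    have hchoose : (m.choose i : ℚ) * (m + 1) = ((m + 1).choose i : ℚ) * ((m + 1 - i : ℕ) : ℚ) := by
      exact_mod_cast congrArg (Nat.cast (R := ℚ)) (Nat.choose_mul_succ_eq m i)
    have hs2 : (-1 : ℚ) ^ (m + 1) * (-1 : ℚ) ^ (m + 1 - i) = (-1 : ℚ) ^ i := by
      rw [← pow_add, show (m + 1) + (m + 1 - i) = 2 * (m + 1 - i) + i by omega, pow_add, pow_mul]
      simp
    rw [h1]
    field_simp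
    linear_combination (((n - m).choose (a - i) : ℚ) * (-1) ^ i) * hchoose -
      (((n - m).choose (a - i) : ℚ) * ((m + 1).choose i : ℚ) * ((m + 1 - i : ℕ) : ℚ)) * hs2
  refine ⟨key, ?_⟩
  rw [key]
  have hc : ((-1 : ℚ) ^ (m + 1) / ((m : ℚ) + 1)) ≠ 0 := by positivity
  simp [_root_.div_eq_zero_iff, hc, hfac]
end

section
/- Let k > 0, a > 0, and m be integers with φ(k, m, a) = φ(k, m, a−1) = 0. Then φ(k−1, m, a) = φ(k−1, m, a−1) = 0, where φ(u,v,w) is the w-th derivative of (x+1)^u (x−1)^v at x = 0. -/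
open Polynomial

lemma iter_lin (b : Polynomial ℚ) (hb : derivative b = 1) (P : Polynomial ℚ) :
    ∀ w : ℕ, derivative^[w+1] (b * P)
      = b * derivative^[w+1] P + C ((w:ℚ)+1) * derivative^[w] P := by
  intro w
  induction w with
  | zero => simp [derivative_mul, hb, add_comm]
  | succ n ih =>
      rw [Function.iterate_succ_apply', ih, derivative_add, derivative_mul, derivative_mul,
        hb, derivative_C, ← Function.iterate_succ_apply' derivative (n+1) P,
        ← Function.iterate_succ_apply' derivative n P]
      have h2 : C (((n+1:ℕ):ℚ)+1) = C ((n:ℚ)+1) + C 1 := by rw [← C_add]; norm_num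
      rw [h2, C_1]
      ring

lemma eval_iter_lin (b : Polynomial ℚ) (hb : derivative b = 1) (P : Polynomial ℚ) (w : ℕ) :
    (derivative^[w] (b * P)).eval 0
      = b.eval 0 * (derivative^[w] P).eval 0 + w * (derivative^[w-1] P).eval 0 := by
  cases w with
  | zero => simp
  | succ n =>
      rw [iter_lin b hb P n]
      simp only [eval_add, eval_mul, eval_C, Nat.succ_sub_one]
      push_cast
      ring

lemma mul_derivative_pow (b : Polynomial ℚ) (hb : derivative b = 1) (u : ℕ) :
    b * derivative (b ^ u) = C (u:ℚ) * b ^ u := by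
  cases u with
  | zero => simp
  | succ n =>
      rw [derivative_pow, hb]
      simp only [Nat.add_sub_cancel]
      ring

lemma ode (u v : ℕ) :
    (X + 1) * (X - 1) * derivative ((X + 1) ^ u * (X - 1) ^ v)
      = (C (u:ℚ) * (X - 1) + C (v:ℚ) * (X + 1)) * ((X + 1) ^ u * (X - 1) ^ v) := by
  have h1 := mul_derivative_pow (X + 1) (by simp) u
  have h2 := mul_derivative_pow (X - 1) (by simp) v
  rw [derivative_mul]
  linear_combination ((X - 1) * (X - 1) ^ v) * h1 + ((X + 1) * (X + 1) ^ u) * h2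

lemma iter_add (w : ℕ) (p q : Polynomial ℚ) :
    derivative^[w] (p + q) = derivative^[w] p + derivative^[w] q := by
  induction w with
  | zero => rfl
  | succ n ih => simp [Function.iterate_succ_apply', ih]

lemma shift_helper (G : Polynomial ℚ) (b : ℕ) :
    (b:ℚ) * (derivative^[b-1] (derivative G)).eval 0
      = (b:ℚ) * (derivative^[b] G).eval 0 := by
  cases b with
  | zero => simp
  | succ n => rw [Nat.succ_sub_one, ← Function.iterate_succ_apply]

/-- If `k > 0`, `a > 0`, `a ≤ m`, and `φ(k,m,a) = φ(k,m,a-1) = 0`, then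
`φ(k-1,m,a) = φ(k-1,m,a-1) = 0`. -/
theorem stmt_11 (k m a : ℕ) (hk : 0 < k) (haa : 0 < a) (ham : a ≤ m)
    (h1 : phi k m a = 0) (h2 : phi k m (a - 1) = 0) :
    phi (k - 1) m a = 0 ∧ phi (k - 1) m (a - 1) = 0 := by
  set G : Polynomial ℚ := (X + 1) ^ (k - 1) * (X - 1) ^ m with hG
  have hphi : ∀ w, phi (k-1) m w = (derivative^[w] G).eval 0 := fun w => rfl
  have hFk : ((X + 1 : Polynomial ℚ)) ^ k * (X - 1) ^ m = (X + 1) * G := by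
    rw [hG, ← mul_assoc, ← pow_succ']
    congr 2
    omega
  have hA : ∀ w, phi k m w
      = (derivative^[w] G).eval 0 + w * (derivative^[w-1] G).eval 0 := by
    intro w
    have h := eval_iter_lin (X + 1) (by simp) G w
    simp only [eval_add, eval_X, eval_one, zero_add, one_mul] at h
    simpa [phi, hFk] using h
  rcases Nat.lt_or_ge a 2 with ha2 | ha2
  · -- a = 1 : contradiction from phi k m 0 ≠ 0
    exfalso
    have ha1 : a = 1 := by omega
    subst ha1
    have h0 : phi k m 0 = (-1 : ℚ) ^ m := by simp [phi]
    rw [show (1:ℕ) - 1 = 0 from rfl, h0] at h2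
    exact pow_ne_zero m (by norm_num : (-1:ℚ) ≠ 0) h2
  · obtain ⟨b, rfl⟩ : ∃ b, a = b + 2 := ⟨a - 2, by omega⟩
    have e1 : (derivative^[b+2] G).eval 0 + ((b:ℚ)+2) * (derivative^[b+1] G).eval 0 = 0 := by
      have h := hA (b+2); rw [h1] at h; push_cast at h; linarith [h]
    have e2 : (derivative^[b+1] G).eval 0 + ((b:ℚ)+1) * (derivative^[b] G).eval 0 = 0 := by
      have h := hA (b+1)
      rw [show phi k m (b+1) = phi k m (b+2-1) from rfl, h2] at h
      push_cast at h; linarith [h]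
    -- ODE relation, differentiated b+1 times and evaluated at 0
    have hode := ode (k-1) m
    rw [mul_assoc] at hode
    have e3 := congrArg (fun p => (derivative^[b+1] p).eval 0) hode
    have hL : (derivative^[b+1] ((X+1) * ((X-1) * derivative G))).eval 0
        = -(derivative^[b+2] G).eval 0 + ((b:ℚ)+1) * (b:ℚ) * (derivative^[b] G).eval 0 := by
      rw [eval_iter_lin (X+1) (by simp) ((X-1) * derivative G) (b+1)]
      simp only [Nat.add_sub_cancel]
      rw [eval_iter_lin (X-1) (by simp) (derivative G) (b+1),
        eval_iter_lin (X-1) (by simp) (derivative G) b]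
      simp only [Nat.add_sub_cancel, eval_add, eval_sub, eval_X, eval_one]
      rw [← Function.iterate_succ_apply derivative (b+1) G,
        ← Function.iterate_succ_apply derivative b G,
        show b+1+1 = b+2 from rfl]
      have hs := shift_helper G b
      push_cast
      nlinarith [hs]
    have hrw : (C (((k-1:ℕ)):ℚ) * (X-1) + C (m:ℚ) * (X+1)) * G
        = C ((((k-1:ℕ)):ℚ) + m) * (X * G) + C ((m:ℚ) - ((k-1:ℕ):ℚ)) * G := by
      simp only [map_add, map_sub]
      ring
    have hR : (derivative^[b+1] ((C (((k-1:ℕ)):ℚ) * (X-1) + C (m:ℚ) * (X+1)) * G)).eval 0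
        = ((((k-1:ℕ)):ℚ) + m) * (((b:ℚ)+1) * (derivative^[b] G).eval 0)
          + ((m:ℚ) - ((k-1:ℕ):ℚ)) * (derivative^[b+1] G).eval 0 := by
      rw [hrw, iter_add, eval_add, iterate_derivative_C_mul, iterate_derivative_C_mul,
        eval_mul, eval_mul, eval_C, eval_C,
        eval_iter_lin X (by simp) G (b+1)]
      simp only [Nat.add_sub_cancel, eval_X, zero_mul, zero_add]
      push_cast
      ring
    rw [hL, hR] at e3
    have hk1 : (((k-1:ℕ)):ℚ) = (k:ℚ) - 1 := by
      rw [Nat.cast_sub hk, Nat.cast_one]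
    rw [hk1] at e3
    have key : (2*(k:ℚ)) * (derivative^[b+1] G).eval 0 = 0 := by
      linear_combination e1 + e3 - ((b:ℚ) - ((k:ℚ)-1) - (m:ℚ)) * e2
    have hkQ : (2*(k:ℚ)) ≠ 0 := by
      have : (0:ℚ) < k := by exact_mod_cast hk
      positivity
    have hy : (derivative^[b+1] G).eval 0 = 0 := by
      rcases mul_eq_zero.1 key with h | h
      · exact absurd h hkQ
      · exact h
    have hx : (derivative^[b+2] G).eval 0 = 0 := by
      rw [hy, mul_zero, add_zero] at e1; exact e1
    constructor
    · rw [hphi (b+2)]; exact hx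
    · rw [show phi (k-1) m (b+2-1) = phi (k-1) m (b+1) from rfl, hphi (b+1)]; exact hy
end

section
/- Let 0 ≤ a ≤ m < n be integers and suppose f(a,m,n) = 0. Then f(a,m+1,n) ≠ 0, where f(a,m,n) = Σ_{k=0}^{a} C(m,k)·C(n−m, a−k)·(−1)^k. -/
open Finset

/-- `f(a,m,n) = Σ_{k=0}^a C(m,k) C(n-m,a-k) (-1)^k`. -/
def fZ (a m n : ℕ) : ℤ :=
  ∑ k ∈ range (a + 1), (m.choose k : ℤ) * ((n - m).choose (a - k)) * (-1) ^ k

open Polynomial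

noncomputable def PP (m n : ℕ) : ℤ[X] := (1 - X) ^ m * (1 + X) ^ (n - m)

lemma coeff_one_sub_pow (M k : ℕ) :
    ((1 - X : ℤ[X]) ^ M).coeff k = (-1) ^ k * M.choose k := by
  have h1 : (1 - X : ℤ[X]) = -(X + C (-1 : ℤ)) := by simp; ring
  rw [h1, neg_pow, show ((-1 : ℤ[X]) ^ M) = C ((-1 : ℤ) ^ M) by rw [map_pow, map_neg, map_one],
    coeff_C_mul, coeff_X_add_C_pow]
  rcases le_or_gt k M with hk | hk
  · have h2 : (-1 : ℤ) ^ M * (-1 : ℤ) ^ (M - k) = (-1) ^ k := by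
      rw [← pow_add, show M + (M - k) = 2 * (M - k) + k by omega, pow_add, pow_mul]
      norm_num
    rw [← mul_assoc, h2]
  · rw [Nat.choose_eq_zero_of_lt hk]; simp

lemma coeff_one_add_pow (K k : ℕ) :
    ((1 + X : ℤ[X]) ^ K).coeff k = K.choose k := coeff_one_add_X_pow ℤ K k

lemma fZ_eq (a m n : ℕ) : fZ a m n = (PP m n).coeff a := by
  rw [PP, coeff_mul, Finset.Nat.sum_antidiagonal_eq_sum_range_succ_mk]
  unfold fZ
  refine Finset.sum_congr rfl fun k _ => ?_
  rw [coeff_one_sub_pow, coeff_one_add_pow]; ring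

lemma R1poly (m n : ℕ) (hmn : m < n) :
    (1 - X) * PP m n = (1 + X) * PP (m + 1) n := by
  unfold PP
  have h1 : n - m = (n - (m + 1)) + 1 := by omega
  rw [h1, pow_succ, pow_succ]
  ring

lemma R1 (m n : ℕ) (hmn : m < n) (j : ℕ) :
    (PP m n).coeff (j + 1) - (PP m n).coeff j
      = (PP (m + 1) n).coeff (j + 1) + (PP (m + 1) n).coeff j := by
  have := congrArg (fun p : ℤ[X] => p.coeff (j + 1)) (R1poly m n hmn)
  simpa [sub_mul, add_mul, coeff_X_mul, sub_eq_add_neg] using this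

lemma derivpoly (M K : ℕ) (hM : 1 ≤ M) :
    (1 - X) * (1 + X) * derivative ((1 - X : ℤ[X]) ^ M * (1 + X) ^ K)
      = (C ((K : ℤ) - M) - C ((M : ℤ) + K) * X) * ((1 - X) ^ M * (1 + X) ^ K) := by
  rw [derivative_mul, derivative_pow, derivative_pow]
  have d1 : derivative (1 - X : ℤ[X]) = -1 := by simp
  have d2 : derivative (1 + X : ℤ[X]) = 1 := by simp
  rw [d1, d2]
  have hM1 : (1 - X : ℤ[X]) * (1 - X) ^ (M - 1) = (1 - X) ^ M := by
    rw [← pow_succ']; congr 1; omega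
  rcases Nat.eq_zero_or_pos K with hK | hK
  · subst hK
    simp only [Nat.cast_zero, pow_zero, C_0, zero_mul, mul_one]
    rw [← hM1]
    simp only [map_sub, map_add, map_neg, map_natCast, map_one, Nat.cast_zero, map_zero]
    -- casts handled above
    ring
  · have hK1 : (1 + X : ℤ[X]) * (1 + X) ^ (K - 1) = (1 + X) ^ K := by
      rw [← pow_succ']; congr 1; omega
    rw [← hM1, ← hK1]
    simp only [map_sub, map_add, map_neg, map_natCast, map_one]
    -- casts handled above
    ring

/-- recurrence: (j+2) q_{j+2} = (K-M) q_{j+1} + (j - M - K) q_j -/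
lemma REC (M K : ℕ) (hM : 1 ≤ M) (j : ℕ) :
    ((j : ℤ) + 2) * ((1 - X : ℤ[X]) ^ M * (1 + X) ^ K).coeff (j + 2)
      = ((K : ℤ) - M) * ((1 - X : ℤ[X]) ^ M * (1 + X) ^ K).coeff (j + 1)
        + ((j : ℤ) - M - K) * ((1 - X : ℤ[X]) ^ M * (1 + X) ^ K).coeff j := by
  set Q : ℤ[X] := (1 - X) ^ M * (1 + X) ^ K with hQ
  have key := congrArg (fun p : ℤ[X] => p.coeff (j + 1)) (derivpoly M K hM)
  have e1 : ((1 - X) * (1 + X) * derivative Q).coeff (j + 1)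
      = (derivative Q).coeff (j + 1) - (X ^ 2 * derivative Q).coeff (j + 1) := by
    have : (1 - X : ℤ[X]) * (1 + X) = 1 - X ^ 2 := by ring
    rw [this, sub_mul, one_mul, coeff_sub]
  have e2 : (X ^ 2 * derivative Q).coeff (j + 1) = (j : ℤ) * Q.coeff j := by
    cases j with
    | zero =>
      simp [coeff_X_pow_mul']
    | succ t =>
      have : t + 1 + 1 = t + 2 := by omega
      rw [this, coeff_X_pow_mul (derivative Q) 2 t, coeff_derivative]
      push_cast; ring
  have e3 : (derivative Q).coeff (j + 1) = ((j : ℤ) + 2) * Q.coeff (j + 2) := by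
    rw [coeff_derivative]; push_cast; ring
  have e4 : ((C ((K : ℤ) - M) - C ((M : ℤ) + K) * X) * Q).coeff (j + 1)
      = ((K : ℤ) - M) * Q.coeff (j + 1) - ((M : ℤ) + K) * Q.coeff j := by
    rw [sub_mul, coeff_sub, coeff_C_mul, mul_assoc, coeff_C_mul, coeff_X_mul]
  simp only [← hQ, e1, e2, e3, e4] at key
  linarith [key]

/-- For `0 ≤ a ≤ m < n`, if `f(a,m,n) = 0` then `f(a,m+1,n) ≠ 0`. -/
theorem stmt_14 (a m n : ℕ) (ham : a ≤ m) (hmn : m < n) (h : fZ a m n = 0) :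
    fZ a (m + 1) n ≠ 0 := by
  intro hq
  -- a ≥ 1
  rcases Nat.eq_zero_or_pos a with ha | ha
  · subst ha
    simp [fZ] at h
  obtain ⟨b, rfl⟩ : ∃ b, a = b + 1 := ⟨a - 1, by omega⟩
  set p : ℕ → ℤ := fun j => (PP m n).coeff j with hp
  set q : ℕ → ℤ := fun j => (PP (m + 1) n).coeff j with hqdef
  have hm1 : 1 ≤ m := by omega
  have hpa : p (b + 1) = 0 := by rw [hp]; simpa [fZ_eq] using h
  have hqa : q (b + 1) = 0 := by rw [hqdef]; simpa [fZ_eq] using hq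
  -- REC for m: with K = n - m, M = m, M + K = n
  have castnm : ((n - m : ℕ) : ℤ) = (n : ℤ) - m := by
    rw [Nat.cast_sub hmn.le]
  have castnm1 : ((n - (m + 1) : ℕ) : ℤ) = (n : ℤ) - m - 1 := by
    rw [Nat.cast_sub (by omega)]; push_cast; ring
  have RECp : ∀ j : ℕ, ((j : ℤ) + 2) * p (j + 2)
      = ((n : ℤ) - 2 * m) * p (j + 1) + ((j : ℤ) - n) * p j := by
    intro j
    have := REC m (n - m) hm1 j
    rw [castnm] at this
    rw [hp]
    unfold PP
    convert this using 2 <;> ring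
  have RECq : ∀ j : ℕ, ((j : ℤ) + 2) * q (j + 2)
      = ((n : ℤ) - 2 * m - 2) * q (j + 1) + ((j : ℤ) - n) * q j := by
    intro j
    have := REC (m + 1) (n - (m + 1)) (by omega) j
    rw [castnm1] at this
    rw [hqdef]
    unfold PP
    push_cast at this ⊢
    convert this using 2 <;> ring
  have hR1 : ∀ j : ℕ, p (j + 1) - p j = q (j + 1) + q j := fun j => R1 m n hmn j
  -- step 1: q b = -p b
  have h1 : q b = -p b := by have := hR1 b; rw [hpa, hqa] at this; linarith
  -- step 2: p (b+2) = q (b+2)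
  have h2 : p (b + 2) = q (b + 2) := by
    have := hR1 (b + 1); rw [hpa, hqa] at this; linarith
  -- step 3 & 4
  have h3 := RECp b
  have h4 := RECq b
  rw [hpa, h2] at h3
  rw [hqa, h1] at h4
  -- h3 : (b+2) * q(b+2) = 0 + (b-n) * p b ; h4 : (b+2)*q(b+2) = 0 + (b-n)*(-p b)
  have hb2 : ((b : ℤ) + 2) ≠ 0 := by positivity
  have hbn : ((b : ℤ) - n) ≠ 0 := by
    have : (b : ℤ) < n := by exact_mod_cast Nat.lt_of_lt_of_le (by omega) (le_of_lt (lt_of_le_of_lt ham hmn))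
    linarith
  have hpb : p b = 0 := by
    have : ((b : ℤ) - n) * p b = -(((b : ℤ) - n) * p b) := by linarith
    have h5 : ((b : ℤ) - n) * p b = 0 := by linarith
    exact (mul_eq_zero.mp h5).resolve_left hbn
  -- downward induction: p j = 0 for all j ≤ b+1
  have down : ∀ t : ℕ, ∀ j : ℕ, j + t = b → p j = 0 ∧ p (j + 1) = 0 := by
    intro t
    induction t with
    | zero => intro j hj; rw [show j = b by omega]; exact ⟨hpb, hpa⟩
    | succ t ih =>
      intro j hj
      obtain ⟨ih1, ih2⟩ := ih (j + 1) (by omega)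
      refine ⟨?_, ih1⟩
      have ih2' : p (j + 2) = 0 := ih2
      have := RECp j
      rw [ih1, ih2'] at this
      have hjn : ((j : ℤ) - n) ≠ 0 := by
        have : (j : ℤ) < n := by
          have : j < n := by omega
          exact_mod_cast this
        linarith
      have h5 : ((j : ℤ) - n) * p j = 0 := by linarith
      exact (mul_eq_zero.mp h5).resolve_left hjn
  have hp0 : p 0 = 0 := (down b 0 (by omega)).1
  have : p 0 = 1 := by
    have h6 : fZ 0 m n = 1 := by simp [fZ]
    rw [fZ_eq] at h6
    exact h6
  rw [this] at hp0
  exact one_ne_zero hp0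
end

section
/- For 0 ≤ a ≤ m ≤ n with 1 ≤ m, F(a,m,n) = f(a, m−1, n−1), where F(a,m,n) = Σ_{j=0}^{a} f(j,m,n) and f(a,m,n) = Σ_{k=0}^{a} C(m,k)·C(n−m, a−k)·(−1)^k. -/
open Finset

/-- `F(a,m,n) = Σ_{j=0}^a f(j,m,n)`. -/
def FZ (a m n : ℕ) : ℤ := ∑ j ∈ range (a + 1), fZ j m n

lemma fZ_key (a m n : ℕ) :
    fZ (a + 1) (m + 1) (n + 1) = fZ (a + 1) m n - fZ a m n := by
  have hnm : n + 1 - (m + 1) = n - m := by omega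
  rw [fZ, fZ, fZ, hnm, Finset.sum_range_succ' _ (a + 1),
    Finset.sum_range_succ' (fun k => (m.choose k : ℤ) * ((n - m).choose (a + 1 - k)) * (-1) ^ k)
      (a + 1)]
  simp only [Nat.choose_succ_succ, Nat.choose_zero_right, Nat.cast_add, Nat.sub_zero,
    pow_zero, Nat.cast_one, one_mul, mul_one]
  have h1 : ∀ k, a + 1 - (k + 1) = a - k := fun k => by omega
  simp only [h1, Nat.succ_eq_add_one]
  have key : ∑ x ∈ range (a + 1),
      ((m.choose x : ℤ) + (m.choose (x + 1) : ℤ)) * ((n - m).choose (a - x)) * (-1) ^ (x + 1) =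
      ∑ x ∈ range (a + 1),
      ((m.choose (x + 1) : ℤ) * ((n - m).choose (a - x)) * (-1) ^ (x + 1) -
        (m.choose x : ℤ) * ((n - m).choose (a - x)) * (-1) ^ x) :=
    Finset.sum_congr rfl (fun k _ => by ring)
  rw [key, Finset.sum_sub_distrib]
  ring

lemma main_aux (a m n : ℕ) : FZ a (m + 1) (n + 1) = fZ a m n := by
  induction a with
  | zero => simp [FZ, fZ]
  | succ a ih =>
    rw [FZ, Finset.sum_range_succ, ← FZ, ih, fZ_key]
    ring

/-- For `0 ≤ a ≤ m ≤ n` with `1 ≤ m`, `F(a,m,n) = f(a,m-1,n-1)`. -/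
theorem stmt_15 (a m n : ℕ) (ham : a ≤ m) (hmn : m ≤ n) (hm : 1 ≤ m) :
    FZ a m n = fZ a (m - 1) (n - 1) := by
  obtain ⟨m', rfl⟩ : ∃ m', m = m' + 1 := ⟨m - 1, by omega⟩
  obtain ⟨n', rfl⟩ : ∃ n', n = n' + 1 := ⟨n - 1, by omega⟩
  simpa using main_aux a m' n'
end
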